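/- The formula A¹Fp is not expressible in TeamLTL(⩔): there is no TeamLTL(⩔)-formula ψ such that for every team (T,i), (T,i) ⊨ ψ if and only if (T,i) ⊨ A¹Fp (i.e., every trace of T eventually satisfies p after time i). Consequently, TeamLTL(⩔) is strictly less expressive than TeamLTL(⩔,A¹). -/

import Mathlib

set_option maxHeartbeats 1000000

universe u

/-- A trace over the set `α` of atomic propositions: an infinite sequence of
sets of propositions. -/
abbrev Trace (α : Type u) := ℕ → Set α

/-- LTL formulae in negation normal form. -/
inductive LTLForm (α : Type u) : Type u where
  | pos : α → LTLForm α
  | neg : α → LTLForm α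
  | lor : LTLForm α → LTLForm α → LTLForm α
  | land : LTLForm α → LTLForm α → LTLForm α
  | next : LTLForm α → LTLForm α
  | luntil : LTLForm α → LTLForm α → LTLForm α
  | wuntil : LTLForm α → LTLForm α → LTLForm α

namespace LTLForm
variable {α : Type u}

/-- Standard single-trace LTL semantics. -/
def sat (t : Trace α) : ℕ → LTLForm α → Prop
  | i, pos p => p ∈ t i
  | i, neg p => p ∉ t i
  | i, lor φ ψ => sat t i φ ∨ sat t i ψ
  | i, land φ ψ => sat t i φ ∧ sat t i ψ
  | i, next φ => sat t (i+1) φ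
  | i, luntil φ ψ => ∃ k, i ≤ k ∧ sat t k ψ ∧ ∀ m, i ≤ m → m < k → sat t m φ
  | i, wuntil φ ψ => ∀ k, i ≤ k → sat t k φ ∨ ∃ m, i ≤ m ∧ m ≤ k ∧ sat t m ψ

/-- Size of an LTL formula. -/
def size : LTLForm α → ℕ
  | pos _ => 1
  | neg _ => 1
  | lor φ ψ => φ.size + ψ.size + 1
  | land φ ψ => φ.size + ψ.size + 1
  | next φ => φ.size + 1
  | luntil φ ψ => φ.size + ψ.size + 1
  | wuntil φ ψ => φ.size + ψ.size + 1

end LTLForm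

/-- Extensions of `TeamLTL` by atoms and connectives:
Boolean disjunction `⩔`, Boolean negation `∼`, inclusion atoms `⊆`,
the universal subteam quantifier `A`, the singleton subteam quantifier `A¹`
and the non-emptiness atom `∼⊥`. -/
inductive TExt : Type where
  | bdis | bneg | incl | asub | asub1 | nebot
deriving DecidableEq

/-- Formulae of TeamLTL together with all the extensions considered in the paper
(fragments are carved out via `TeamForm.exts`). -/
inductive TeamForm (α : Type u) : Type u where
  | pos : α → TeamForm α
  | neg : α → TeamForm α
  | lor : TeamForm α → TeamForm α → TeamForm α
  | land : TeamForm α → TeamForm α → TeamForm α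
  | next : TeamForm α → TeamForm α
  | luntil : TeamForm α → TeamForm α → TeamForm α
  | wuntil : TeamForm α → TeamForm α → TeamForm α
  | bdis : TeamForm α → TeamForm α → TeamForm α
  | bneg : TeamForm α → TeamForm α
  | incl : List (LTLForm α × LTLForm α) → TeamForm α
  | asub : TeamForm α → TeamForm α
  | asub1 : TeamForm α → TeamForm α
  | nebot : TeamForm α

namespace TeamForm
variable {α : Type u}

/-- Synchronous team semantics for (extended) TeamLTL. -/
def sat : Set (Trace α) → ℕ → TeamForm α → Prop
  | T, i, pos p => ∀ t ∈ T, p ∈ t i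
  | T, i, neg p => ∀ t ∈ T, p ∉ t i
  | T, i, lor φ ψ => ∃ T₁ T₂, T₁ ∪ T₂ = T ∧ sat T₁ i φ ∧ sat T₂ i ψ
  | T, i, land φ ψ => sat T i φ ∧ sat T i ψ
  | T, i, next φ => sat T (i+1) φ
  | T, i, luntil φ ψ => ∃ k, i ≤ k ∧ sat T k ψ ∧ ∀ m, i ≤ m → m < k → sat T m φ
  | T, i, wuntil φ ψ => ∀ k, i ≤ k → sat T k φ ∨ ∃ m, i ≤ m ∧ m ≤ k ∧ sat T m ψ
  | T, i, bdis φ ψ => sat T i φ ∨ sat T i ψ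
  | T, i, bneg φ => ¬ sat T i φ
  | T, i, incl ps => ∀ t ∈ T, ∃ t' ∈ T, ∀ p ∈ ps, (LTLForm.sat t i p.1 ↔ LTLForm.sat t' i p.2)
  | T, i, asub φ => ∀ S, S ⊆ T → sat S i φ
  | T, i, asub1 φ => ∀ t ∈ T, sat {t} i φ
  | T, _, nebot => T.Nonempty

/-- The collection of extensions (atoms/connectives beyond core TeamLTL)
occurring in a formula. -/
def exts : TeamForm α → Set TExt
  | pos _ => ∅
  | neg _ => ∅
  | lor φ ψ => exts φ ∪ exts ψ
  | land φ ψ => exts φ ∪ exts ψ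
  | next φ => exts φ
  | luntil φ ψ => exts φ ∪ exts ψ
  | wuntil φ ψ => exts φ ∪ exts ψ
  | bdis φ ψ => insert TExt.bdis (exts φ ∪ exts ψ)
  | bneg φ => insert TExt.bneg (exts φ)
  | incl _ => {TExt.incl}
  | asub φ => insert TExt.asub (exts φ)
  | asub1 φ => insert TExt.asub1 (exts φ)
  | nebot => {TExt.nebot}

/-- Size of an (extended) TeamLTL formula. -/
def size : TeamForm α → ℕ
  | pos _ => 1
  | neg _ => 1
  | lor φ ψ => φ.size + ψ.size + 1
  | land φ ψ => φ.size + ψ.size + 1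
  | next φ => φ.size + 1
  | luntil φ ψ => φ.size + ψ.size + 1
  | wuntil φ ψ => φ.size + ψ.size + 1
  | bdis φ ψ => φ.size + ψ.size + 1
  | bneg φ => φ.size + 1
  | incl ps => (ps.map (fun p => p.1.size + p.2.size)).sum + 1
  | asub φ => φ.size + 1
  | asub1 φ => φ.size + 1
  | nebot => 1

end TeamForm

namespace Stmt15
variable {α : Type u}

/-- The `TeamLTL(⩔,A¹)`-formula `A¹ F p`, where `F φ := ⊤ U φ` and
`⊤ := p ∨ ¬p`. -/
def aFp (p : α) : TeamForm α :=
  TeamForm.asub1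
    (TeamForm.luntil (TeamForm.lor (TeamForm.pos p) (TeamForm.neg p)) (TeamForm.pos p))

/-! The proof rests on a continuity property of `TeamLTL(⩔)`: if a trace `t₀` is the limit of
an infinite team `T`, in the sense that at each time all but finitely many traces of `T` agree
with `t₀`, then every `TeamLTL(⩔)`-formula true in `T` stays true once `t₀` is added. Literals
pass to `t₀` through a trace of `T` agreeing with it, and a split `T₁ ∪ T₂` of an infinite team
has an infinite half, which receives `t₀`. The team of traces having `p` exactly once, at time
`n`, satisfies `A¹ F p`, and its limit is the trace that never satisfies `p`, so `A¹ F p` is not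
of this kind. -/

def IsCofiniteLimit (T : Set (Trace α)) (t₀ : Trace α) : Prop :=
  T.Infinite ∧ ∀ i, {t ∈ T | t i ≠ t₀ i}.Finite

namespace IsCofiniteLimit

variable {T T' : Set (Trace α)} {t₀ : Trace α}

theorem mono (h : IsCofiniteLimit T t₀) (hsub : T' ⊆ T) (hT' : T'.Infinite) :
    IsCofiniteLimit T' t₀ :=
  ⟨hT', fun i => (h.2 i).subset fun _ ht => ⟨hsub ht.1, ht.2⟩⟩

theorem exists_agree (h : IsCofiniteLimit T t₀) (i : ℕ) : ∃ t ∈ T, t i = t₀ i := by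
  obtain ⟨t, htT, hti⟩ := (h.1.sdiff (h.2 i)).nonempty
  exact ⟨t, htT, by_contra fun hne => hti ⟨htT, hne⟩⟩

end IsCofiniteLimit

theorem sat_insert_of_isCofiniteLimit {ψ : TeamForm α} (hψ : ψ.exts ⊆ {TExt.bdis})
    {T : Set (Trace α)} {t₀ : Trace α} (hT : IsCofiniteLimit T t₀) {i : ℕ}
    (h : TeamForm.sat T i ψ) : TeamForm.sat (insert t₀ T) i ψ := by
  induction ψ generalizing T i with
  | pos q | neg q =>
    obtain ⟨t, htT, hti⟩ := hT.exists_agree i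
    rintro s (rfl | hs)
    · exact hti ▸ h t htT
    · exact h s hs
  | lor φ₁ φ₂ ih₁ ih₂ =>
    obtain ⟨hψ₁, hψ₂⟩ := Set.union_subset_iff.mp hψ
    obtain ⟨T₁, T₂, rfl, h₁, h₂⟩ := h
    rcases Set.infinite_union.mp hT.1 with hT₁ | hT₂
    · exact ⟨insert t₀ T₁, T₂, Set.insert_union,
        ih₁ hψ₁ (hT.mono Set.subset_union_left hT₁) h₁, h₂⟩
    · exact ⟨T₁, insert t₀ T₂, Set.union_insert,
        h₁, ih₂ hψ₂ (hT.mono Set.subset_union_right hT₂) h₂⟩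
  | land φ₁ φ₂ ih₁ ih₂ =>
    obtain ⟨hψ₁, hψ₂⟩ := Set.union_subset_iff.mp hψ
    exact ⟨ih₁ hψ₁ hT h.1, ih₂ hψ₂ hT h.2⟩
  | next φ ih => exact ih hψ hT h
  | luntil φ₁ φ₂ ih₁ ih₂ =>
    obtain ⟨hψ₁, hψ₂⟩ := Set.union_subset_iff.mp hψ
    obtain ⟨k, hik, hk, hbefore⟩ := h
    exact ⟨k, hik, ih₂ hψ₂ hT hk, fun m him hmk => ih₁ hψ₁ hT (hbefore m him hmk)⟩
  | wuntil φ₁ φ₂ ih₁ ih₂ =>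
    obtain ⟨hψ₁, hψ₂⟩ := Set.union_subset_iff.mp hψ
    intro k hik
    rcases h k hik with hk | ⟨m, him, hmk, hm⟩
    · exact Or.inl (ih₁ hψ₁ hT hk)
    · exact Or.inr ⟨m, him, hmk, ih₂ hψ₂ hT hm⟩
  | bdis φ₁ φ₂ ih₁ ih₂ =>
    obtain ⟨hψ₁, hψ₂⟩ := Set.union_subset_iff.mp (Set.insert_subset_iff.mp hψ).2
    exact h.imp (ih₁ hψ₁ hT) (ih₂ hψ₂ hT)
  | bneg | incl | asub | asub1 | nebot => simp [TeamForm.exts] at hψ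

theorem sat_lor_pos_neg (p : α) (T : Set (Trace α)) (i : ℕ) :
    TeamForm.sat T i (TeamForm.lor (TeamForm.pos p) (TeamForm.neg p)) :=
  ⟨T ∩ {t | p ∈ t i}, T \ {t | p ∈ t i}, Set.inter_union_sdiff T _, fun _ ht => ht.2,
    fun _ ht => ht.2⟩

theorem aFp_sat (p : α) (T : Set (Trace α)) (i : ℕ) :
    TeamForm.sat T i (aFp p) ↔ ∀ t ∈ T, ∃ k, i ≤ k ∧ p ∈ t k := by
  refine forall₂_congr fun t _ => ⟨?_, ?_⟩
  · rintro ⟨k, hik, hk, -⟩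
    exact ⟨k, hik, hk t rfl⟩
  · rintro ⟨k, hik, hk⟩
    exact ⟨k, hik, by simpa [TeamForm.sat] using hk, fun m _ _ => sat_lor_pos_neg p {t} m⟩

def pulse (p : α) (n : ℕ) : Trace α := fun k => if k = n then {p} else ∅

theorem mem_pulse_self (p : α) (n : ℕ) : p ∈ pulse p n n := by simp [pulse]

theorem pulse_injective (p : α) : Function.Injective (pulse p) := by
  intro n m h
  have hp : p ∈ pulse p m n := h ▸ mem_pulse_self p n
  by_contra hne
  simp [pulse, hne] at hp

theorem isCofiniteLimit_range_pulse (p : α) :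
    IsCofiniteLimit (Set.range (pulse p)) fun _ => ∅ := by
  refine ⟨Set.infinite_range_of_injective (pulse_injective p), fun i => ?_⟩
  refine (Set.finite_singleton (pulse p i)).subset ?_
  rintro _ ⟨⟨n, rfl⟩, hne⟩
  obtain rfl : i = n := by_contra fun hin => hne (by simp [pulse, hin])
  rfl

/-- The formula `A¹ F p` is not expressible in `TeamLTL(⩔)`:
there is no `TeamLTL(⩔)`-formula `ψ` satisfied by exactly those teams `(T,i)`
in which every trace of `T` eventually satisfies `p` after time `i`
(which are exactly the teams satisfying `A¹ F p`).  Consequently,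
`TeamLTL(⩔)` is strictly less expressive than `TeamLTL(⩔,A¹)`. -/
theorem stmt_15 (p : α) :
    -- `A¹ F p` indeed expresses the stated property
    (∀ (T : Set (Trace α)) (i : ℕ),
        TeamForm.sat T i (aFp p) ↔ ∀ t ∈ T, ∃ k, i ≤ k ∧ p ∈ t k) ∧
    -- `A¹ F p` is not expressible in `TeamLTL(⩔)`
    (¬ ∃ ψ : TeamForm α, ψ.exts ⊆ {TExt.bdis} ∧
        ∀ (T : Set (Trace α)) (i : ℕ),
          TeamForm.sat T i ψ ↔ TeamForm.sat T i (aFp p)) ∧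
    -- and `TeamLTL(⩔)` is at most as expressive as `TeamLTL(⩔,A¹)`,
    -- hence strictly less expressive
    (∀ φ : TeamForm α, φ.exts ⊆ {TExt.bdis} →
        ∃ ψ : TeamForm α, ψ.exts ⊆ {TExt.bdis, TExt.asub1} ∧
          ∀ (T : Set (Trace α)) (i : ℕ),
            TeamForm.sat T i φ ↔ TeamForm.sat T i ψ) := by
  refine ⟨aFp_sat p, ?_, fun φ hφ => ⟨φ, hφ.trans (by simp), fun _ _ => Iff.rfl⟩⟩
  rintro ⟨ψ, hψ, hψ_iff⟩
  have hpulses : TeamForm.sat (Set.range (pulse p)) 0 ψ := by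
    rw [hψ_iff, aFp_sat]
    rintro _ ⟨n, rfl⟩
    exact ⟨n, n.zero_le, mem_pulse_self p n⟩
  have hlimit := sat_insert_of_isCofiniteLimit hψ (isCofiniteLimit_range_pulse p) hpulses
  rw [hψ_iff, aFp_sat] at hlimit
  obtain ⟨k, -, hk⟩ := hlimit _ (Set.mem_insert _ _)
  exact hk

end Stmt15
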